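/- Let ξ₁, …, ξ_m be independent random variables with common distribution P(ξ_n = 1) = p = 1 − P(ξ_n = 0), where 0 < p ≤ 1, and let a₁, …, a_m be real numbers. Set Z = Σ_{n=1}^m (p − ξ_n) a_n, σ² = Σ_{n=1}^m a_n² and B = max_{1 ≤ n ≤ m} |a_n|. If Y > 0 satisfies Y·B ≤ 2pσ², then P( |Z| ≥ Y ) ≤ 2 exp( −Y² / (4 p σ²) ). -/

import Mathlib

/-!
Chernoff's method. For `|s| ≤ 1` one has `e^{-s} ≤ 1 - s + s²`, which together with
`1 + x ≤ eˣ` bounds the moment generating function of `Xₙ = (p - ξₙ) aₙ` by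
`E e^{t Xₙ} = e^{p t aₙ} (1 + p (e^{-t aₙ} - 1)) ≤ e^{p t² aₙ²}` as long as `|t aₙ| ≤ 1`.
By independence `E e^{t Z} ≤ e^{p t² σ²}`, and Markov's inequality at the optimal
`t = Y / (2 p σ²)`, which is admissible precisely because `Y B ≤ 2 p σ²`, gives
`P(Z ≥ Y) ≤ e^{-Y² / (4 p σ²)}`. The same bound for `-Z` and a union bound finish the proof.
-/

open MeasureTheory ProbabilityTheory Real

section ZeroOneValued

variable {Ω : Type*} [MeasurableSpace Ω] {P : Measure Ω} {f : Ω → ℝ}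

lemma ae_eq_one_or_eq_zero_of_bernoulli [IsProbabilityMeasure P] (hf : Measurable f) {p : ℝ}
    (hp0 : 0 ≤ p) (hp1 : p ≤ 1) (h1 : P {ω | f ω = 1} = ENNReal.ofReal p)
    (h0 : P {ω | f ω = 0} = ENNReal.ofReal (1 - p)) :
    ∀ᵐ ω ∂P, f ω = 1 ∨ f ω = 0 := by
  have hdisj : Disjoint {ω | f ω = 1} {ω | f ω = 0} :=
    Set.disjoint_left.mpr fun ω h1ω h0ω => one_ne_zero (h1ω.symm.trans h0ω)
  have hA : MeasurableSet {ω | f ω = 1} := hf (measurableSet_singleton 1)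
  have hB : MeasurableSet {ω | f ω = 0} := hf (measurableSet_singleton 0)
  refine (ae_iff_measure_eq (hA.union hB).nullMeasurableSet).mpr ?_
  change P ({ω | f ω = 1} ∪ {ω | f ω = 0}) = P Set.univ
  rw [measure_union hdisj hB, h1, h0, ← ENNReal.ofReal_add hp0 (sub_nonneg.mpr hp1),
    add_sub_cancel, ENNReal.ofReal_one, measure_univ]

open Classical in
lemma comp_ae_eq_piecewise (h01 : ∀ᵐ ω ∂P, f ω = 1 ∨ f ω = 0) (g : ℝ → ℝ) :
    (fun ω => g (f ω)) =ᵐ[P] {ω | f ω = 1}.piecewise (fun _ => g 1) (fun _ => g 0) := by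
  filter_upwards [h01] with ω hω
  rcases hω with h | h <;> simp [Set.piecewise, h]

lemma integrable_comp_of_ae_eq_one_or_eq_zero [IsFiniteMeasure P] (hf : Measurable f)
    (h01 : ∀ᵐ ω ∂P, f ω = 1 ∨ f ω = 0) (g : ℝ → ℝ) : Integrable (fun ω => g (f ω)) P := by
  classical
  exact (Integrable.piecewise (hf (measurableSet_singleton 1)) (integrable_const _).integrableOn
    (integrable_const _).integrableOn).congr (comp_ae_eq_piecewise h01 g).symm

lemma integral_comp_of_ae_eq_one_or_eq_zero [IsProbabilityMeasure P] (hf : Measurable f)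
    (h01 : ∀ᵐ ω ∂P, f ω = 1 ∨ f ω = 0) (g : ℝ → ℝ) :
    ∫ ω, g (f ω) ∂P = P.real {ω | f ω = 1} * g 1 + (1 - P.real {ω | f ω = 1}) * g 0 := by
  classical
  have hA : MeasurableSet {ω | f ω = 1} := hf (measurableSet_singleton 1)
  rw [integral_congr_ae (comp_ae_eq_piecewise h01 g),
    integral_piecewise hA (integrable_const _).integrableOn (integrable_const _).integrableOn,
    setIntegral_const, setIntegral_const, probReal_compl_eq_one_sub hA, smul_eq_mul, smul_eq_mul]

end ZeroOneValued

lemma exp_neg_sub_one_add_le_sq {s : ℝ} (hs : |s| ≤ 1) : exp (-s) - 1 + s ≤ s ^ 2 := by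
  have h := (le_abs_self _).trans (abs_exp_sub_one_sub_id_le (x := -s) (by rwa [abs_neg]))
  rwa [neg_sq, sub_neg_eq_add] at h

lemma bernoulli_mgf_le_exp_sq {p s : ℝ} (hp : 0 ≤ p) (hs : |s| ≤ 1) :
    p * exp ((p - 1) * s) + (1 - p) * exp (p * s) ≤ exp (p * s ^ 2) :=
  calc p * exp ((p - 1) * s) + (1 - p) * exp (p * s)
      = exp (p * s) * (1 + p * (exp (-s) - 1)) := by
        rw [show (p - 1) * s = p * s + -s by ring, exp_add]; ring
    _ ≤ exp (p * s) * exp (p * (exp (-s) - 1)) := by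
        gcongr; linarith [add_one_le_exp (p * (exp (-s) - 1))]
    _ = exp (p * (exp (-s) - 1 + s)) := by rw [← exp_add]; ring_nf
    _ ≤ exp (p * s ^ 2) := by gcongr; exact exp_neg_sub_one_add_le_sq hs

lemma measureReal_sum_ge_le_of_mgf_le {Ω ι : Type*} [MeasurableSpace Ω] {P : Measure Ω}
    [IsProbabilityMeasure P] [Fintype ι] {X : ι → Ω → ℝ} (hindep : iIndepFun X P)
    (hmeas : ∀ i, Measurable (X i)) {t : ℝ} (ht : 0 ≤ t)
    (hint : ∀ i, Integrable (fun ω => exp (t * X i ω)) P) {c : ι → ℝ}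
    (hc : ∀ i, mgf (X i) P t ≤ exp (c i)) (Y : ℝ) :
    P.real {ω | Y ≤ ∑ i, X i ω} ≤ exp (-t * Y + ∑ i, c i) := by
  have hchernoff := measure_ge_le_exp_mul_mgf Y ht
    (hindep.integrable_exp_mul_sum hmeas (s := Finset.univ) fun i _ => hint i)
  simp only [Finset.sum_apply] at hchernoff
  calc P.real {ω | Y ≤ ∑ i, X i ω} ≤ exp (-t * Y) * mgf (∑ i, X i) P t := hchernoff
    _ ≤ exp (-t * Y) * ∏ i, exp (c i) := by
        rw [hindep.mgf_sum hmeas]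
        gcongr with i
        · exact fun i _ => mgf_nonneg
        · exact hc i
    _ = exp (-t * Y + ∑ i, c i) := by rw [← exp_sum, ← exp_add]

lemma mgf_weighted_bernoulli_le {Ω : Type*} [MeasurableSpace Ω] {P : Measure Ω}
    [IsProbabilityMeasure P] {ξ : Ω → ℝ} (hξ : Measurable ξ) (h01 : ∀ᵐ ω ∂P, ξ ω = 1 ∨ ξ ω = 0)
    {p : ℝ} (hp : 0 ≤ p) (h1 : P.real {ω | ξ ω = 1} = p) {a t : ℝ} (hta : |t * a| ≤ 1) :
    mgf (fun ω => (p - ξ ω) * a) P t ≤ exp (p * (t * a) ^ 2) := by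
  have hmgf := integral_comp_of_ae_eq_one_or_eq_zero hξ h01 fun x => exp (t * ((p - x) * a))
  rw [h1] at hmgf
  calc mgf (fun ω => (p - ξ ω) * a) P t
      = p * exp ((p - 1) * (t * a)) + (1 - p) * exp (p * (t * a)) := by
        rw [mgf, hmgf]; ring_nf
    _ ≤ exp (p * (t * a) ^ 2) := bernoulli_mgf_le_exp_sq hp hta

lemma measureReal_weighted_bernoulli_sum_ge_le {Ω ι : Type*} [MeasurableSpace Ω]
    {P : Measure Ω} [IsProbabilityMeasure P] [Fintype ι] {ξ : ι → Ω → ℝ}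
    (hmeas : ∀ i, Measurable (ξ i)) (hindep : iIndepFun ξ P)
    (h01 : ∀ i, ∀ᵐ ω ∂P, ξ i ω = 1 ∨ ξ i ω = 0) {p : ℝ} (hp : 0 < p)
    (h1 : ∀ i, P.real {ω | ξ i ω = 1} = p) {a : ι → ℝ} (ha : 0 < ∑ i, a i ^ 2) {Y : ℝ}
    (hY : 0 ≤ Y) (hYa : ∀ i, Y * |a i| ≤ 2 * p * ∑ i, a i ^ 2) :
    P.real {ω | Y ≤ ∑ i, (p - ξ i ω) * a i} ≤ exp (-Y ^ 2 / (4 * p * ∑ i, a i ^ 2)) := by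
  set σ2 := ∑ i, a i ^ 2 with hσ2
  set t := Y / (2 * p * σ2)
  have ht : 0 ≤ t := by positivity
  have hta : ∀ i, |t * a i| ≤ 1 := fun i => by
    rw [abs_mul, abs_of_nonneg ht, div_mul_eq_mul_div, div_le_one (by positivity)]
    exact hYa i
  have hX := hindep.comp (fun i x => (p - x) * a i) fun i => by fun_prop
  calc P.real {ω | Y ≤ ∑ i, (p - ξ i ω) * a i}
      ≤ exp (-t * Y + ∑ i, p * (t * a i) ^ 2) :=
        measureReal_sum_ge_le_of_mgf_le hX (fun i => by fun_prop) ht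
          (fun i => integrable_comp_of_ae_eq_one_or_eq_zero (hmeas i) (h01 i)
            fun x => exp (t * ((p - x) * a i)))
          (fun i => mgf_weighted_bernoulli_le (hmeas i) (h01 i) hp.le (h1 i) (hta i)) Y
    _ = exp (-Y ^ 2 / (4 * p * σ2)) := by
        congr 1
        simp_rw [mul_pow, ← Finset.mul_sum, ← hσ2, t]
        field_simp
        ring

/-- The real-coefficient tail bound: for independent Bernoulli(p) variables `ξₙ`, real weights
`aₙ`, `Z = Σ (p - ξₙ) aₙ`, `σ² = Σ aₙ²`, `B = max |aₙ|`, if `Y·B ≤ 2pσ²` then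
`P(|Z| ≥ Y) ≤ 2 exp(-Y²/(4 p σ²))`. -/
theorem bernoulli_weighted_sum_real_tail
    {Ω : Type*} [MeasurableSpace Ω] (P : Measure Ω) [IsProbabilityMeasure P]
    (m : ℕ) (ξ : Fin m → Ω → ℝ) (hmeas : ∀ n, Measurable (ξ n))
    (p : ℝ) (hp0 : 0 < p) (hp1 : p ≤ 1)
    (hindep : iIndepFun ξ P)
    (h1 : ∀ n, P {ω | ξ n ω = 1} = ENNReal.ofReal p)
    (h0 : ∀ n, P {ω | ξ n ω = 0} = ENNReal.ofReal (1 - p))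
    (a : Fin m → ℝ) (σ2 B Y : ℝ)
    (hσ : σ2 = ∑ n, (a n) ^ 2)
    (hB : IsGreatest {x : ℝ | ∃ n, x = |a n|} B)
    (hY : 0 < Y) (hYB : Y * B ≤ 2 * p * σ2) :
    P {ω | Y ≤ |∑ n, (p - ξ n ω) * a n|}
      ≤ ENNReal.ofReal (2 * Real.exp (-Y ^ 2 / (4 * p * σ2))) := by
  subst hσ
  rcases (Finset.sum_nonneg fun n _ => sq_nonneg (a n)).eq_or_lt with hσ0 | hσpos
  · -- `x / 0 = 0`, so for `σ² = 0` the claimed bound is `2`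
    rw [← hσ0, mul_zero, div_zero, exp_zero, mul_one]
    exact prob_le_one.trans (by norm_num)
  have h01 n := ae_eq_one_or_eq_zero_of_bernoulli (hmeas n) hp0.le hp1 (h1 n) (h0 n)
  have h1real n : P.real {ω | ξ n ω = 1} = p := by
    rw [measureReal_def, h1 n, ENNReal.toReal_ofReal hp0.le]
  have hYa n : Y * |a n| ≤ 2 * p * ∑ n, a n ^ 2 :=
    (mul_le_mul_of_nonneg_left (hB.2 ⟨n, rfl⟩) hY.le).trans hYB
  have hupper :=
    measureReal_weighted_bernoulli_sum_ge_le hmeas hindep h01 hp0 h1real hσpos hY.le hYa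
  have hlower := measureReal_weighted_bernoulli_sum_ge_le hmeas hindep h01 hp0 h1real
    (a := fun n => -a n) (by simpa using hσpos) hY.le (by simpa using hYa)
  simp only [mul_neg, Finset.sum_neg_distrib, neg_sq] at hlower
  rw [← ofReal_measureReal]
  refine ENNReal.ofReal_le_ofReal ?_
  calc P.real {ω | Y ≤ |∑ n, (p - ξ n ω) * a n|}
      ≤ P.real ({ω | Y ≤ ∑ n, (p - ξ n ω) * a n} ∪ {ω | Y ≤ -∑ n, (p - ξ n ω) * a n}) :=
        measureReal_mono fun _ => (le_abs (α := ℝ)).mp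
    _ ≤ _ := measureReal_union_le _ _
    _ ≤ 2 * exp (-Y ^ 2 / (4 * p * ∑ n, a n ^ 2)) := by linarith
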